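/- arXiv:1403.1016 — 3 statements merged into one kernel-verified Lean document; each statement's English description precedes it below -/
import Mathlib

section
/- Let f, g : ℝⁿ → ℝ be quadratic forms with no common zero except 0 ∈ ℝⁿ. Then the set {(f(x), g(x)) : x ∈ ℝⁿ} is closed and convex. -/
/-!
The map `x ↦ (f x, g x)` is a quadratic map `Q` into `ℝ × ℝ`. Its range is a cone, since
`Q (√c • x) = c • Q x`, and it is closed under addition: replacing `(x, y)` by the rotated pair
`(cos s • x + sin s • y, -sin s • x + cos s • y)` preserves `Q x + Q y`, while the determinant of the
two values changes sign between `s = 0` and `s = π / 2`. At an intermediate angle the two values are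
collinear, and then their sum is a nonnegative multiple of one of them. A cone closed under addition
is convex.

For closedness, the absence of common nonzero zeros and homogeneity give `m * ‖x‖ ^ 2 ≤ ‖Q x‖`,
where `m > 0` is the minimum of `‖Q‖` on the unit sphere, so `Q` is a proper map.
-/

open Real Filter Metric

section Plane

variable {𝕜 : Type*} [Field 𝕜]

lemma exists_nonneg_smul_eq_add_of_eq_smul [LinearOrder 𝕜] [IsStrictOrderedRing 𝕜]
    {E : Type*} [AddCommGroup E] [Module 𝕜 E] {p q : E} {l : 𝕜} (hq : q = l • p) :
    ∃ t : 𝕜, 0 ≤ t ∧ (p + q = t • p ∨ p + q = t • q) := by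
  rcases le_or_gt 0 (1 + l) with hl | hl
  · exact ⟨1 + l, hl, .inl (by rw [hq]; module)⟩
  have hl₀ : l ≠ 0 := by linarith
  have hl_inv : -1 < l⁻¹ := by
    rw [lt_inv_of_neg (by norm_num) (by linarith)]
    linarith
  refine ⟨1 + l⁻¹, by linarith, .inr ?_⟩
  rw [hq, smul_smul, add_mul, inv_mul_cancel₀ hl₀]
  module

lemma Prod.eq_zero_or_exists_eq_smul_of_mul_eq_mul {p q : 𝕜 × 𝕜} (h : p.1 * q.2 = p.2 * q.1) :
    p = 0 ∨ ∃ l : 𝕜, q = l • p := by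
  by_cases h₁ : p.1 = 0
  · by_cases h₂ : p.2 = 0
    · exact .inl (Prod.ext h₁ h₂)
    have hq₁ : q.1 = 0 := by simpa [h₁, h₂] using h
    exact .inr ⟨q.2 / p.2, Prod.ext (by simp [h₁, hq₁]) (by simp [h₂])⟩
  refine .inr ⟨q.1 / p.1, Prod.ext (by simp [h₁]) ?_⟩
  simp only [Prod.smul_snd, smul_eq_mul]
  field_simp
  linear_combination h

end Plane

namespace QuadraticMap

section CommRing

variable {R M N : Type*} [CommRing R] [AddCommGroup M] [Module R M] [AddCommGroup N] [Module R N]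

theorem map_smul_add_smul (Q : QuadraticMap R M N) (a b : R) (x y : M) :
    Q (a • x + b • y) = (a * a) • Q x + (b * b) • Q y + (a * b) • polar Q x y := by
  have h : polar Q (a • x) (b • y) = Q (a • x + b • y) - Q (a • x) - Q (b • y) := rfl
  rw [polar_smul_left, polar_smul_right, Q.map_smul, Q.map_smul, smul_smul] at h
  rw [h]
  abel

theorem map_rotate_add_map_rotate (Q : QuadraticMap R M N) {a b : R} (hab : a ^ 2 + b ^ 2 = 1)
    (x y : M) : Q (a • x + b • y) + Q (-b • x + a • y) = Q x + Q y := by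
  rw [map_smul_add_smul, map_smul_add_smul]
  linear_combination (norm := module) hab • Q x + hab • Q y

end CommRing

section Real

variable {V N : Type*} [AddCommGroup V] [Module ℝ V] [AddCommGroup N] [Module ℝ N]

theorem smul_mem_range (Q : QuadraticMap ℝ V N) {c : ℝ} (hc : 0 ≤ c) {p : N}
    (hp : p ∈ Set.range Q) : c • p ∈ Set.range Q := by
  obtain ⟨x, rfl⟩ := hp
  exact ⟨√c • x, by rw [Q.map_smul, mul_self_sqrt hc]⟩

theorem continuous_map_smul_add_smul [TopologicalSpace N] [IsTopologicalAddGroup N]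
    [ContinuousSMul ℝ N] (Q : QuadraticMap ℝ V N) {a b : ℝ → ℝ} (ha : Continuous a)
    (hb : Continuous b) (x y : V) : Continuous fun s ↦ Q (a s • x + b s • y) := by
  simp only [map_smul_add_smul]
  fun_prop

theorem add_mem_range (Q : QuadraticMap ℝ V (ℝ × ℝ)) (x y : V) : Q x + Q y ∈ Set.range Q := by
  set u : ℝ → ℝ × ℝ := fun s ↦ Q (cos s • x + sin s • y)
  set v : ℝ → ℝ × ℝ := fun s ↦ Q (-sin s • x + cos s • y)
  have hu : Continuous u := Q.continuous_map_smul_add_smul continuous_cos continuous_sin x y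
  have hv : Continuous v := Q.continuous_map_smul_add_smul continuous_sin.neg continuous_cos x y
  set det : ℝ → ℝ := fun s ↦ (u s).1 * (v s).2 - (u s).2 * (v s).1
  have hdet : Continuous det := (hu.fst.mul hv.snd).sub (hu.snd.mul hv.fst)
  have hdet_pi_div_two : det (π / 2) = -det 0 := by
    simp only [det, u, v, cos_zero, sin_zero, cos_pi_div_two, sin_pi_div_two, neg_zero, zero_smul,
      one_smul, neg_smul, zero_add, add_zero, QuadraticMap.map_neg]
    ring
  obtain ⟨s, -, hs⟩ : ∃ s ∈ Set.uIcc 0 (π / 2), det s = 0 := by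
    refine intermediate_value_uIcc hdet.continuousOn ?_
    rw [hdet_pi_div_two]
    rcases le_total (det 0) 0 with h | h <;> simp [h]
  rw [← Q.map_rotate_add_map_rotate (cos_sq_add_sin_sq s)]
  change u s + v s ∈ _
  rcases Prod.eq_zero_or_exists_eq_smul_of_mul_eq_mul (sub_eq_zero.1 hs) with h | ⟨l, hl⟩
  · exact ⟨_, by rw [h, zero_add]⟩
  obtain ⟨t, ht, h | h⟩ := exists_nonneg_smul_eq_add_of_eq_smul hl <;> rw [h]
  exacts [Q.smul_mem_range ht ⟨_, rfl⟩, Q.smul_mem_range ht ⟨_, rfl⟩]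

def rangeCone (Q : QuadraticMap ℝ V (ℝ × ℝ)) : PointedCone ℝ (ℝ × ℝ) where
  carrier := Set.range Q
  zero_mem' := ⟨0, Q.map_zero⟩
  add_mem' := by
    rintro _ _ ⟨x, rfl⟩ ⟨y, rfl⟩
    exact Q.add_mem_range x y
  smul_mem' c _ hp := Q.smul_mem_range c.2 hp

theorem convex_range (Q : QuadraticMap ℝ V (ℝ × ℝ)) : Convex ℝ (Set.range Q) :=
  Q.rangeCone.convex

end Real

section Normed

variable {E F : Type*} [NormedAddCommGroup E] [NormedSpace ℝ E] [FiniteDimensional ℝ E]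
  [NormedAddCommGroup F] [NormedSpace ℝ F]

theorem continuous_of_finiteDimensional (Q : QuadraticMap ℝ E F) : Continuous Q := by
  have hB := (associated (R := ℝ) Q).toContinuousBilinearMap.continuous₂
  convert hB.comp (continuous_id.prodMk continuous_id) using 1
  exact funext fun x ↦ (associated_eq_self_apply ℝ Q x).symm

theorem exists_pos_mul_norm_sq_le (Q : QuadraticMap ℝ E F) (hQ : ∀ x, Q x = 0 → x = 0) :
    ∃ m > 0, ∀ x, m * ‖x‖ ^ 2 ≤ ‖Q x‖ := by
  obtain ⟨m, hm, hmin⟩ : ∃ m > 0, ∀ w ∈ sphere (0 : E) 1, m ≤ ‖Q w‖ := by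
    rcases (sphere (0 : E) 1).eq_empty_or_nonempty with h | h
    · exact ⟨1, one_pos, by simp [h]⟩
    obtain ⟨w₀, hw₀, hmin⟩ := (isCompact_sphere (0 : E) 1).exists_isMinOn h
      Q.continuous_of_finiteDimensional.norm.continuousOn
    refine ⟨‖Q w₀‖, norm_pos_iff.2 fun h ↦ ?_, fun w hw ↦ hmin hw⟩
    simp [hQ w₀ h] at hw₀
  refine ⟨m, hm, fun x ↦ ?_⟩
  rcases eq_or_ne x 0 with rfl | hx
  · simp
  have hx' : ‖x‖ ≠ 0 := norm_ne_zero_iff.2 hx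
  have hw : ‖x‖⁻¹ • x ∈ sphere (0 : E) 1 := by simp [norm_smul, hx']
  calc m * ‖x‖ ^ 2 ≤ ‖Q (‖x‖⁻¹ • x)‖ * ‖x‖ ^ 2 := by gcongr; exact hmin _ hw
    _ = ‖Q x‖ := by
      rw [Q.map_smul, norm_smul, Real.norm_eq_abs, abs_mul_self]
      field_simp

variable [FiniteDimensional ℝ F]

theorem tendsto_cocompact (Q : QuadraticMap ℝ E F) (hQ : ∀ x, Q x = 0 → x = 0) :
    Tendsto Q (cocompact E) (cocompact F) := by
  obtain ⟨m, hm, hle⟩ := Q.exists_pos_mul_norm_sq_le hQ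
  rw [← cobounded_eq_cocompact, ← cobounded_eq_cocompact, ← tendsto_norm_atTop_iff_cobounded]
  refine tendsto_atTop_mono hle (Tendsto.const_mul_atTop hm ?_)
  exact (tendsto_pow_atTop two_ne_zero).comp tendsto_norm_cobounded_atTop

theorem isClosed_range (Q : QuadraticMap ℝ E F) (hQ : ∀ x, Q x = 0 → x = 0) :
    IsClosed (Set.range Q) :=
  (isProperMap_iff_tendsto_cocompact.2
    ⟨Q.continuous_of_finiteDimensional, Q.tendsto_cocompact hQ⟩).isClosed_range

end Normed

end QuadraticMap

theorem dines_closed_convex_general (n : ℕ) (f g : (Fin n → ℝ) → ℝ)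
    (A B : Matrix (Fin n) (Fin n) ℝ)
    (hf : ∀ x, f x = dotProduct x (A.mulVec x))
    (hg : ∀ x, g x = dotProduct x (B.mulVec x))
    (hzero : ∀ x : Fin n → ℝ, f x = 0 → g x = 0 → x = 0) :
    IsClosed {p : ℝ × ℝ | ∃ x : Fin n → ℝ, p = (f x, g x)} ∧
    Convex ℝ {p : ℝ × ℝ | ∃ x : Fin n → ℝ, p = (f x, g x)} := by
  let Q : QuadraticMap ℝ (Fin n → ℝ) (ℝ × ℝ) :=
    (LinearMap.inl ℝ ℝ ℝ).compQuadraticMap A.toQuadraticForm' +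
      (LinearMap.inr ℝ ℝ ℝ).compQuadraticMap B.toQuadraticForm'
  have hQ : ∀ x, Q x = (f x, g x) := fun x ↦ by
    simp [Q, Matrix.toQuadraticForm', Matrix.toLinearMap₂'_apply', hf, hg]
  have hrange : {p : ℝ × ℝ | ∃ x, p = (f x, g x)} = Set.range Q := by
    ext p
    simp [hQ, eq_comm]
  rw [hrange]
  refine ⟨Q.isClosed_range fun x hx ↦ ?_, Q.convex_range⟩
  rw [hQ, Prod.mk_eq_zero] at hx
  exact hzero x hx.1 hx.2

theorem dines_closed_convex (n : ℕ) (f g : (Fin n → ℝ) → ℝ)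
    (A B : Matrix (Fin n) (Fin n) ℝ) (hA : A.IsSymm) (hB : B.IsSymm)
    (hf : ∀ x, f x = dotProduct x (A.mulVec x))
    (hg : ∀ x, g x = dotProduct x (B.mulVec x))
    (hzero : ∀ x : Fin n → ℝ, f x = 0 → g x = 0 → x = 0) :
    IsClosed {p : ℝ × ℝ | ∃ x : Fin n → ℝ, p = (f x, g x)} ∧
    Convex ℝ {p : ℝ × ℝ | ∃ x : Fin n → ℝ, p = (f x, g x)} :=
  dines_closed_convex_general n f g A B hf hg hzero
end

section
/- Let f, g : ℝⁿ → ℝ be quadratic functions (polynomials of degree at most 2) such that g(x̄) > 0 for some x̄ ∈ ℝⁿ. Then g(x) ≥ 0 implies f(x) ≥ 0 for all x ∈ ℝⁿ if and only if there exists ξ ≥ 0 such that f(x) − ξ·g(x) ≥ 0 for all x ∈ ℝⁿ. -/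
/-!
Homogenizing turns `f` and `g` into quadratic forms `F`, `G` on `ℝⁿ × ℝ` that agree with them on
the slice `t = 1`. The implication `G ≥ 0 → F ≥ 0` spreads from that slice to all of `ℝⁿ × ℝ` by
scaling, and to the hyperplane `t = 0` by perturbing towards the Slater point.

By Dines' theorem the joint range `{(F v, G v)}` is convex: along `v θ = cos θ • p + sin θ • q`
one has `Q (v (θ + π/2)) = Q p + Q q - Q (v θ)`, so by the intermediate value theorem some
`(F (v θ), G (v θ))` is a positive multiple of `(F p + F q, G p + G q)`. The convex range misses
the open quadrant `{u < 0 < w}`; a line separating them passes through the origin and gives the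
multiplier `ξ`, and the Slater point keeps that line from being vertical.
-/

open Filter Set Topology Real Matrix

theorem nonneg_of_forall_pos_nonneg_add_mul_add_sq_mul {a b c : ℝ}
    (h : ∀ ε > 0, 0 ≤ a + ε * b + ε ^ 2 * c) : 0 ≤ a := by
  have hlim : Tendsto (fun ε : ℝ => a + ε * b + ε ^ 2 * c) (𝓝[>] 0) (𝓝 a) :=
    tendsto_nhdsWithin_of_tendsto_nhds <| by
      simpa using (by fun_prop : Continuous fun ε : ℝ => a + ε * b + ε ^ 2 * c).tendsto 0
  exact ge_of_tendsto hlim (eventually_nhdsWithin_of_forall h)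

theorem exists_eq_zero_of_map_eq_neg {f : ℝ → ℝ} (hf : Continuous f) (a b : ℝ)
    (h : f b = -f a) : ∃ x, f x = 0 := by
  have h0 : (0 : ℝ) ∈ uIcc (f a) (f b) := by
    rw [h, mem_uIcc]; rcases le_total (f a) 0 with ha | ha
    · exact Or.inl ⟨ha, by linarith⟩
    · exact Or.inr ⟨by linarith, ha⟩
  obtain ⟨x, -, hx⟩ := intermediate_value_uIcc hf.continuousOn h0
  exact ⟨x, hx⟩

theorem exists_eq_mul_and_eq_mul_of_mul_eq_mul {x₁ x₂ y₁ y₂ : ℝ} (hy : y₁ ≠ 0 ∨ y₂ ≠ 0)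
    (h : x₁ * y₂ = x₂ * y₁) : ∃ t, x₁ = t * y₁ ∧ x₂ = t * y₂ := by
  rcases hy with hy | hy
  · exact ⟨x₁ / y₁, by field_simp, by field_simp; linarith⟩
  · exact ⟨x₂ / y₂, by field_simp; linarith, by field_simp⟩

namespace QuadraticMap

variable {V : Type*} [AddCommGroup V] [Module ℝ V]

theorem map_add_smul (Q : QuadraticForm ℝ V) (p q : V) (t : ℝ) :
    Q (p + t • q) = Q p + t * polar Q p q + t ^ 2 * Q q := by
  rw [QuadraticMap.map_add Q, QuadraticMap.map_smul, polar_smul_right, smul_eq_mul, smul_eq_mul]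
  ring

theorem map_smul_add_smul_s2 (Q : QuadraticForm ℝ V) (s t : ℝ) (p q : V) :
    Q (s • p + t • q) = s ^ 2 * Q p + s * t * polar Q p q + t ^ 2 * Q q := by
  rw [map_add_smul, QuadraticMap.map_smul, polar_smul_left, smul_eq_mul, smul_eq_mul]
  ring

theorem map_sqrt_smul (Q : QuadraticForm ℝ V) {t : ℝ} (ht : 0 ≤ t) (v : V) :
    Q (√t • v) = t * Q v := by
  rw [QuadraticMap.map_smul, mul_self_sqrt ht, smul_eq_mul]

theorem map_rotate_add_map (Q : QuadraticForm ℝ V) {c s : ℝ} (h : c ^ 2 + s ^ 2 = 1) (p q : V) :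
    Q (c • p + s • q) + Q ((-s) • p + c • q) = Q p + Q q := by
  rw [map_smul_add_smul_s2, map_smul_add_smul_s2]
  linear_combination (Q p + Q q) * h

theorem exists_map_eq_add_map (Q₁ Q₂ : QuadraticForm ℝ V) (p q : V) :
    ∃ r, Q₁ r = Q₁ p + Q₁ q ∧ Q₂ r = Q₂ p + Q₂ q := by
  set T₁ := Q₁ p + Q₁ q
  set T₂ := Q₂ p + Q₂ q
  by_cases hT : T₁ = 0 ∧ T₂ = 0
  · exact ⟨0, by simp [hT.1], by simp [hT.2]⟩
  let v : ℝ → V := fun θ => cos θ • p + sin θ • q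
  have hquarter : ∀ (Q : QuadraticForm ℝ V) θ, Q (v (θ + π / 2)) = Q p + Q q - Q (v θ) := by
    intro Q θ
    rw [← map_rotate_add_map Q (cos_sq_add_sin_sq θ) p q]
    simp only [v, cos_add_pi_div_two, sin_add_pi_div_two]
    ring
  obtain ⟨θ, hθ⟩ : ∃ θ, Q₁ (v θ) * T₂ - Q₂ (v θ) * T₁ = 0 :=
    exists_eq_zero_of_map_eq_neg (by simp only [v, map_smul_add_smul_s2]; fun_prop) 0 (0 + π / 2)
      (by rw [hquarter, hquarter]; ring)
  obtain ⟨t, ht₁, ht₂⟩ := exists_eq_mul_and_eq_mul_of_mul_eq_mul (not_and_or.mp hT)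
    (sub_eq_zero.mp hθ)
  obtain ⟨θ', t', ht', h₁, h₂⟩ :
      ∃ θ' t', 0 < t' ∧ Q₁ (v θ') = t' * T₁ ∧ Q₂ (v θ') = t' * T₂ := by
    rcases lt_or_ge 0 t with ht | ht
    · exact ⟨θ, t, ht, ht₁, ht₂⟩
    · exact ⟨θ + π / 2, 1 - t, by linarith, by rw [hquarter, ht₁]; ring,
        by rw [hquarter, ht₂]; ring⟩
  refine ⟨√t'⁻¹ • v θ', ?_, ?_⟩
  · rw [map_sqrt_smul _ (inv_nonneg.mpr ht'.le), h₁, inv_mul_cancel_left₀ ht'.ne']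
  · rw [map_sqrt_smul _ (inv_nonneg.mpr ht'.le), h₂, inv_mul_cancel_left₀ ht'.ne']

theorem convex_range_prodMk (Q₁ Q₂ : QuadraticForm ℝ V) :
    Convex ℝ (range fun v => (Q₁ v, Q₂ v)) := by
  rintro - ⟨p, rfl⟩ - ⟨q, rfl⟩ μ ν hμ hν -
  obtain ⟨r, h₁, h₂⟩ := exists_map_eq_add_map Q₁ Q₂ (√μ • p) (√ν • q)
  refine ⟨r, ?_⟩
  simp only [h₁, h₂, map_sqrt_smul _ hμ, map_sqrt_smul _ hν, Prod.smul_mk, Prod.mk_add_mk,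
    smul_eq_mul]

theorem exists_forall_nonneg_sub_mul_of_nonneg_imp (Q₁ Q₂ : QuadraticForm ℝ V)
    (himp : ∀ v, 0 ≤ Q₂ v → 0 ≤ Q₁ v) (hslater : ∃ v, 0 < Q₂ v) :
    ∃ ξ ≥ 0, ∀ v, 0 ≤ Q₁ v - ξ * Q₂ v := by
  obtain ⟨v₀, hv₀⟩ := hslater
  have hdisj : Disjoint (Iio 0 ×ˢ Ioi 0) (range fun v => (Q₁ v, Q₂ v)) := by
    rw [disjoint_left]
    rintro _ ⟨h₁, h₂⟩ ⟨v, rfl⟩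
    exact not_le.mpr h₁ (himp v (le_of_lt h₂))
  obtain ⟨φ, u, hs, hM⟩ := geometric_hahn_banach_open ((convex_Iio 0).prod (convex_Ioi 0))
    (isOpen_Iio.prod isOpen_Ioi) (convex_range_prodMk Q₁ Q₂) hdisj
  set α := φ (1, 0)
  set β := φ (0, 1)
  have hφ : ∀ x y : ℝ, φ (x, y) = x * α + y * β := by
    intro x y
    have : ((x, y) : ℝ × ℝ) = x • (1, 0) + y • (0, 1) := by simp
    rw [this, map_add, map_smul, map_smul, smul_eq_mul, smul_eq_mul]
  have hcl : ∀ z ∈ Iic 0 ×ˢ Ici 0, φ z ≤ u := by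
    have := closure_minimal (fun z hz => (hs z hz).le) (isClosed_le φ.continuous continuous_const)
    rwa [closure_prod_eq, closure_Iio, closure_Ioi] at this
  have hu : u = 0 := le_antisymm (by simpa using hM 0 ⟨0, by simp⟩)
    (by simpa using hcl 0 (by simp))
  have hα : 0 ≤ α := by simpa [hφ, hu] using hcl (-1, 0) (by norm_num)
  have hβ : β ≤ 0 := by simpa [hφ, hu] using hcl (0, 1) (by norm_num)
  have hrange : ∀ v, 0 ≤ Q₁ v * α + Q₂ v * β := fun v => by simpa [hφ, hu] using hM _ ⟨v, rfl⟩
  have hα' : 0 < α := by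
    refine lt_of_le_of_ne hα fun h => ?_
    have h₁ : β < 0 := by simpa [hφ, hu, ← h] using hs (-1, 1) ⟨by norm_num, by norm_num⟩
    have h₂ : 0 ≤ Q₂ v₀ * β := by simpa [← h] using hrange v₀
    nlinarith
  refine ⟨-β / α, div_nonneg (neg_nonneg.mpr hβ) hα, fun v => ?_⟩
  have : Q₁ v - -β / α * Q₂ v = (Q₁ v * α + Q₂ v * β) / α := by field_simp; ring
  rw [this]
  exact div_nonneg (hrange v) hα

theorem nonneg_of_nonneg_of_forall_eq_one (Q₁ Q₂ : QuadraticForm ℝ V) (ℓ : V →ₗ[ℝ] ℝ)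
    (himp : ∀ w, ℓ w = 1 → 0 ≤ Q₂ w → 0 ≤ Q₁ w) {w₀ : V} (hw₀ : ℓ w₀ = 1) (hpos : 0 < Q₂ w₀)
    {w : V} (hw : 0 ≤ Q₂ w) : 0 ≤ Q₁ w := by
  have hoff : ∀ v, ℓ v ≠ 0 → 0 ≤ Q₂ v → 0 ≤ Q₁ v := by
    intro v hℓ hv
    have hscale : ∀ Q : QuadraticForm ℝ V, Q v = ℓ v ^ 2 * Q ((ℓ v)⁻¹ • v) := fun Q => by
      rw [QuadraticMap.map_smul, smul_eq_mul]; field_simp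
    rw [hscale] at hv ⊢
    have hsq : 0 < ℓ v ^ 2 := by positivity
    refine mul_nonneg hsq.le (himp _ ?_ (nonneg_of_mul_nonneg_right hv hsq))
    rw [map_smul, smul_eq_mul, inv_mul_cancel₀ hℓ]
  obtain hℓ | hℓ := ne_or_eq (ℓ w) 0
  · exact hoff w hℓ hw
  -- Perturb `w` off `ker ℓ` towards `w₀`, after choosing its sign so that `Q₂` increases.
  obtain ⟨w', h₁, h₂, hℓ', hpolar⟩ :
      ∃ w', Q₁ w' = Q₁ w ∧ Q₂ w' = Q₂ w ∧ ℓ w' = 0 ∧ 0 ≤ polar Q₂ w' w₀ := by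
    rcases le_total 0 (polar Q₂ w w₀) with h | h
    · exact ⟨w, rfl, rfl, hℓ, h⟩
    · exact ⟨-w, Q₁.map_neg w, Q₂.map_neg w, by simp [hℓ], by rw [polar_neg_left]; linarith⟩
  rw [← h₁]
  refine nonneg_of_forall_pos_nonneg_add_mul_add_sq_mul (b := polar Q₁ w' w₀) (c := Q₁ w₀)
    fun ε hε => ?_
  rw [← map_add_smul]
  refine hoff _ (by simp [hℓ', hw₀, hε.ne']) ?_
  rw [map_add_smul, h₂]
  positivity

def homogenize (Q : QuadraticForm ℝ V) (ℓ : V →ₗ[ℝ] ℝ) (c : ℝ) : QuadraticForm ℝ (V × ℝ) :=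
  Q.comp (LinearMap.fst ℝ V ℝ) + linMulLin (LinearMap.snd ℝ V ℝ) (ℓ.comp (LinearMap.fst ℝ V ℝ)) +
    c • linMulLin (LinearMap.snd ℝ V ℝ) (LinearMap.snd ℝ V ℝ)

@[simp]
theorem homogenize_apply_one (Q : QuadraticForm ℝ V) (ℓ : V →ₗ[ℝ] ℝ) (c : ℝ) (x : V) :
    homogenize Q ℓ c (x, 1) = Q x + ℓ x + c := by
  simp [homogenize]

theorem exists_forall_nonneg_add_add_sub_mul_of_nonneg_imp (Qf Qg : QuadraticForm ℝ V)
    (ℓf ℓg : V →ₗ[ℝ] ℝ) (cf cg : ℝ) (himp : ∀ x, 0 ≤ Qg x + ℓg x + cg → 0 ≤ Qf x + ℓf x + cf)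
    (hslater : ∃ x, 0 < Qg x + ℓg x + cg) :
    ∃ ξ ≥ 0, ∀ x, 0 ≤ Qf x + ℓf x + cf - ξ * (Qg x + ℓg x + cg) := by
  obtain ⟨x₀, hx₀⟩ := hslater
  have hslice : ∀ w : V × ℝ, w.2 = 1 →
      0 ≤ homogenize Qg ℓg cg w → 0 ≤ homogenize Qf ℓf cf w := by
    rintro ⟨x, _⟩ rfl
    simpa using himp x
  have hx₀' : 0 < homogenize Qg ℓg cg (x₀, 1) := by simpa using hx₀
  obtain ⟨ξ, hξ, h⟩ := exists_forall_nonneg_sub_mul_of_nonneg_imp _ _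
    (fun w => nonneg_of_nonneg_of_forall_eq_one _ _ (LinearMap.snd ℝ V ℝ) hslice rfl hx₀')
    ⟨_, hx₀'⟩
  exact ⟨ξ, hξ, fun x => by simpa using h (x, 1)⟩

end QuadraticMap

theorem Matrix.toQuadraticForm'_apply {n : Type*} [Fintype n] [DecidableEq n]
    (A : Matrix n n ℝ) (x : n → ℝ) : A.toQuadraticForm' x = x ⬝ᵥ A *ᵥ x :=
  Matrix.toLinearMap₂'_apply' A x x

theorem s_lemma_general (n : ℕ) (f g : (Fin n → ℝ) → ℝ)
    (A B : Matrix (Fin n) (Fin n) ℝ) (a b : Fin n → ℝ) (c d : ℝ)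
    (hf : ∀ x, f x = dotProduct x (A.mulVec x) + dotProduct a x + c)
    (hg : ∀ x, g x = dotProduct x (B.mulVec x) + dotProduct b x + d)
    (hslater : ∃ xbar : Fin n → ℝ, g xbar > 0) :
    (∀ x : Fin n → ℝ, g x ≥ 0 → f x ≥ 0) ↔
      ∃ ξ : ℝ, ξ ≥ 0 ∧ ∀ x : Fin n → ℝ, f x - ξ * g x ≥ 0 := by
  have hf' : ∀ x, f x = A.toQuadraticForm' x + dotProductEquiv ℝ (Fin n) a x + c := by
    simpa [Matrix.toQuadraticForm'_apply] using hf
  have hg' : ∀ x, g x = B.toQuadraticForm' x + dotProductEquiv ℝ (Fin n) b x + d := by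
    simpa [Matrix.toQuadraticForm'_apply] using hg
  constructor
  · intro himp
    obtain ⟨ξ, hξ, h⟩ :=
      QuadraticMap.exists_forall_nonneg_add_add_sub_mul_of_nonneg_imp _ _ _ _ _ _
        (fun x => by simpa only [hf', hg'] using himp x) (by simpa only [hg'] using hslater)
    exact ⟨ξ, hξ, fun x => by simpa only [hf', hg'] using h x⟩
  · rintro ⟨ξ, hξ, h⟩ x hx
    linarith [h x, mul_nonneg hξ hx]

theorem s_lemma (n : ℕ) (f g : (Fin n → ℝ) → ℝ)
    (A B : Matrix (Fin n) (Fin n) ℝ) (a b : Fin n → ℝ) (c d : ℝ)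
    (hA : A.IsSymm) (hB : B.IsSymm)
    (hf : ∀ x, f x = dotProduct x (A.mulVec x) + dotProduct a x + c)
    (hg : ∀ x, g x = dotProduct x (B.mulVec x) + dotProduct b x + d)
    (hslater : ∃ xbar : Fin n → ℝ, g xbar > 0) :
    (∀ x : Fin n → ℝ, g x ≥ 0 → f x ≥ 0) ↔
      ∃ ξ : ℝ, ξ ≥ 0 ∧ ∀ x : Fin n → ℝ, f x - ξ * g x ≥ 0 :=
  s_lemma_general n f g A B a b c d hf hg hslater
end

section
/- Let f, g : ℝⁿ → ℝ be homogeneous polynomials of degree k ≥ 1 with no common zero except 0, having at most one line through the origin contained in {(f(x), g(x)) : x ∈ ℝⁿ}. If f is copositive with g and there exists z ∈ ℝⁿ with f(z) < 0, then there exists ξ > 0 such that f(x) − ξ·g(x) ≥ 0 for all x ∈ ℝⁿ. -/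
/-!
Let `M` be the supremum of `f / g` over `{g < 0}`: it is positive since `f z < 0` forces
`g z < 0`, and finite because on the compact part of the unit sphere where `f ≤ 0` and `g ≤ 0` the
function `g` does not vanish, while `f / g` is invariant under scaling. Then `M * g ≤ f` holds on
`{g < 0}` by the choice of `M` and on `{g = 0}` by copositivity. If it failed at a point with
`g > 0`, then every slope `s` strictly between `f / g` at that point and `M` would be the slope of
a line in the image: the open region `f < s * g` misses `{g = 0}` and meets both `{g > 0}` and
`{g < 0}`, so connectedness of the punctured space produces zeros of `f - s * g` on both sides,
which positive rescaling turns into the two opposite points of the line. In dimension one `f / g`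
is constant.
-/

theorem MvPolynomial.IsHomogeneous.eval_smul {σ R : Type*} [CommSemiring R]
    {p : MvPolynomial σ R} {k : ℕ} (hp : p.IsHomogeneous k) (c : R) (x : σ → R) :
    MvPolynomial.eval (c • x) p = c ^ k * MvPolynomial.eval x p := by
  rw [MvPolynomial.eval_eq, MvPolynomial.eval_eq, Finset.mul_sum]
  refine Finset.sum_congr rfl fun d hd => ?_
  have hdeg : ∑ i ∈ d.support, d i = k := by
    simpa [Finsupp.weight_apply, Finsupp.sum] using hp (MvPolynomial.mem_support_iff.mp hd)
  simp only [Pi.smul_apply, smul_eq_mul, mul_pow, Finset.prod_mul_distrib,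
    Finset.prod_pow_eq_pow_sum, hdeg]
  ring

def IsLineDirection {α : Type*} (f g : α → ℝ) (a b : ℝ) : Prop :=
  a ^ 2 + b ^ 2 = 1 ∧ (∃ x, f x = a ∧ g x = b) ∧ (∃ x, f x = -a ∧ g x = -b)

theorem IsPreconnected.exists_pos_and_eq_zero {X : Type*} [TopologicalSpace X] {W : Set X}
    (hW : IsPreconnected W) {u h : X → ℝ} (hu : Continuous u) (hh : Continuous h)
    (hzero : ∀ x ∈ W, u x = 0 → 0 < h x) {x₀ x₁ : X} (hx₀ : x₀ ∈ W) (hx₁ : x₁ ∈ W)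
    (hu₀ : 0 < u x₀) (hh₀ : h x₀ < 0) (hu₁ : u x₁ < 0) : ∃ y ∈ W, 0 < u y ∧ h y = 0 := by
  by_contra! hne
  have hcover : W ⊆ {x | 0 < u x ∧ h x < 0} ∪ ({x | u x < 0} ∪ {x | 0 < h x}) := by
    intro x hx
    rcases lt_trichotomy (u x) 0 with hux | hux | hux
    · exact Or.inr (Or.inl hux)
    · exact Or.inr (Or.inr (hzero x hx hux))
    · rcases (hne x hx hux).lt_or_gt with hhx | hhx
      · exact Or.inl ⟨hux, hhx⟩
      · exact Or.inr (Or.inr hhx)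
  obtain ⟨y, -, ⟨hyu, hyh⟩, hy⟩ := hW _ _
    ((isOpen_lt continuous_const hu).inter (isOpen_lt hh continuous_const))
    ((isOpen_lt hu continuous_const).union (isOpen_lt continuous_const hh))
    hcover ⟨x₀, hx₀, hu₀, hh₀⟩ ⟨x₁, hx₁, Or.inl hu₁⟩
  rcases hy with hy | hy
  · exact lt_asymm hyu (show u y < 0 from hy)
  · exact lt_asymm hyh (show 0 < h y from hy)

section Homogeneous

variable {E : Type*} [AddCommGroup E] [Module ℝ E] {f g : E → ℝ} {k : ℕ}

theorem apply_zero_of_homogeneous (hk : k ≠ 0) (hf : ∀ (c : ℝ) x, f (c • x) = c ^ k * f x) :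
    f 0 = 0 := by
  simpa [zero_pow hk] using hf 0 0

theorem div_apply_smul (hf : ∀ (c : ℝ) x, f (c • x) = c ^ k * f x)
    (hg : ∀ (c : ℝ) x, g (c • x) = c ^ k * g x) {c : ℝ} (hc : c ≠ 0) (x : E) :
    f (c • x) / g (c • x) = f x / g x := by
  rw [hf, hg, mul_div_mul_left _ _ (pow_ne_zero _ hc)]

theorem exists_apply_eq_mul (hk : k ≠ 0) (hf : ∀ (c : ℝ) x, f (c • x) = c ^ k * f x)
    (hg : ∀ (c : ℝ) x, g (c • x) = c ^ k * g x) (y : E) {c : ℝ} (hc : 0 ≤ c) :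
    ∃ x, f x = c * f y ∧ g x = c * g y :=
  ⟨c ^ (k⁻¹ : ℝ) • y, by rw [hf, Real.rpow_inv_natCast_pow hc hk],
    by rw [hg, Real.rpow_inv_natCast_pow hc hk]⟩

theorem exists_pos_smul_le_of_forall_eq_smul (hf : ∀ (c : ℝ) x, f (c • x) = c ^ k * f x)
    (hg : ∀ (c : ℝ) x, g (c • x) = c ^ k * g x) {z : E} (hfz : f z < 0) (hgz : g z < 0)
    (hspan : ∀ x, ∃ c : ℝ, c • z = x) : ∃ ξ, 0 < ξ ∧ ∀ x, ξ * g x ≤ f x := by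
  refine ⟨f z / g z, div_pos_of_neg_of_neg hfz hgz, fun x => ?_⟩
  obtain ⟨c, rfl⟩ := hspan x
  refine le_of_eq ?_
  rw [hf, hg]
  field_simp [hgz.ne]

end Homogeneous

section Copositive

variable {E : Type*} [NormedAddCommGroup E] [NormedSpace ℝ E] {f g : E → ℝ} {k : ℕ}

theorem bddAbove_div_of_neg [ProperSpace E] (hk : k ≠ 0)
    (hf : ∀ (c : ℝ) x, f (c • x) = c ^ k * f x) (hg : ∀ (c : ℝ) x, g (c • x) = c ^ k * g x)
    (hfc : Continuous f) (hgc : Continuous g) (hzero : ∀ x, f x = 0 → g x = 0 → x = 0)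
    (hcop : ∀ x, g x ≥ 0 → f x ≥ 0) :
    BddAbove ((fun x => f x / g x) '' {x | g x < 0}) := by
  set K := Metric.sphere (0 : E) 1 ∩ {x | f x ≤ 0} ∩ {x | g x ≤ 0}
  have hK : IsCompact K := ((isCompact_sphere 0 1).inter_right
    (isClosed_le hfc continuous_const)).inter_right (isClosed_le hgc continuous_const)
  have hgK : ∀ x ∈ K, g x ≠ 0 := fun x hx hgx => by
    have hx0 := hzero x (le_antisymm hx.1.2 (hcop x hgx.ge)) hgx
    simpa [hx0] using hx.1.1
  obtain ⟨B, hB⟩ := hK.bddAbove_image (hfc.continuousOn.div hgc.continuousOn hgK)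
  refine ⟨max B 0, ?_⟩
  rintro _ ⟨x, hx, rfl⟩
  have hx0 : x ≠ 0 := by
    rintro rfl
    simp [apply_zero_of_homogeneous hk hg] at hx
  have hnx : ‖x‖⁻¹ ≠ 0 := inv_ne_zero (norm_ne_zero_iff.2 hx0)
  dsimp only
  rw [← div_apply_smul hf hg hnx]
  have hgy : g (‖x‖⁻¹ • x) < 0 := by
    rw [hg]
    exact mul_neg_of_pos_of_neg (by positivity) hx
  by_cases hfy : f (‖x‖⁻¹ • x) ≤ 0
  · have hyK : ‖x‖⁻¹ • x ∈ K :=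
      ⟨⟨mem_sphere_zero_iff_norm.2 (norm_smul_inv_norm hx0), hfy⟩, hgy.le⟩
    exact (hB ⟨_, hyK, rfl⟩).trans (le_max_left _ _)
  · exact (div_neg_of_pos_of_neg (not_le.1 hfy) hgy).le.trans (le_max_right _ _)

theorem exists_isLineDirection_of_isPreconnected (hE : IsPreconnected ({0}ᶜ : Set E))
    (hk : k ≠ 0) (hf : ∀ (c : ℝ) x, f (c • x) = c ^ k * f x)
    (hg : ∀ (c : ℝ) x, g (c • x) = c ^ k * g x) (hfc : Continuous f) (hgc : Continuous g)
    (hzero : ∀ x, f x = 0 → g x = 0 → x = 0) (hcop : ∀ x, g x ≥ 0 → f x ≥ 0) {s : ℝ}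
    {x₀ x₁ : E} (hg₀ : 0 < g x₀) (hf₀ : f x₀ < s * g x₀) (hg₁ : g x₁ < 0)
    (hf₁ : f x₁ < s * g x₁) : ∃ b, 0 < b ∧ IsLineDirection f g (s * b) b := by
  have hg0 := apply_zero_of_homogeneous hk hg
  have hx₀ : x₀ ≠ 0 := by rintro rfl; exact hg₀.ne' hg0
  have hx₁ : x₁ ≠ 0 := by rintro rfl; exact hg₁.ne hg0
  have hpos : ∀ x ∈ ({0}ᶜ : Set E), g x = 0 → 0 < f x - s * g x := fun x hx hgx => by
    have hfx := (hcop x hgx.ge).lt_of_ne fun hfx => hx (hzero x hfx.symm hgx)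
    simpa [hgx] using hfx
  have hhc : Continuous fun x => f x - s * g x := hfc.sub (continuous_const.mul hgc)
  obtain ⟨y₁, -, hgy₁, hy₁⟩ := hE.exists_pos_and_eq_zero hgc hhc hpos hx₀ hx₁ hg₀
    (by linarith) hg₁
  obtain ⟨y₂, -, hgy₂, hy₂⟩ := hE.exists_pos_and_eq_zero hgc.neg hhc
    (fun x hx hgx => hpos x hx (neg_eq_zero.1 hgx)) hx₁ hx₀ (neg_pos.2 hg₁) (by linarith)
    (neg_lt_zero.2 hg₀)
  have hgy₂' : g y₂ < 0 := neg_pos.1 hgy₂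
  set b := (√(1 + s ^ 2))⁻¹
  have hb : 0 < b := by positivity
  obtain ⟨x, hfx, hgx⟩ := exists_apply_eq_mul hk hf hg y₁ (div_pos hb hgy₁).le
  obtain ⟨x', hfx', hgx'⟩ := exists_apply_eq_mul hk hf hg y₂
    (div_pos_of_neg_of_neg (neg_neg_of_pos hb) hgy₂').le
  refine ⟨b, hb, ?_, ⟨x, ?_, ?_⟩, ⟨x', ?_, ?_⟩⟩
  · rw [mul_pow, inv_pow, Real.sq_sqrt (by positivity)]
    field_simp
    ring
  · rw [hfx, show f y₁ = s * g y₁ by linarith]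
    field_simp
  · rw [hgx]
    field_simp
  · rw [hfx', show f y₂ = s * g y₂ by linarith]
    field_simp [hgy₂'.ne]
  · rw [hgx']
    field_simp [hgy₂'.ne]

theorem exists_pos_smul_le_of_isPreconnected [ProperSpace E]
    (hE : IsPreconnected ({0}ᶜ : Set E)) (hk : k ≠ 0)
    (hf : ∀ (c : ℝ) x, f (c • x) = c ^ k * f x) (hg : ∀ (c : ℝ) x, g (c • x) = c ^ k * g x)
    (hfc : Continuous f) (hgc : Continuous g) (hzero : ∀ x, f x = 0 → g x = 0 → x = 0)
    (hline : ∀ a b a' b' : ℝ, IsLineDirection f g a b → IsLineDirection f g a' b' →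
      (a = a' ∧ b = b') ∨ (a = -a' ∧ b = -b'))
    (hcop : ∀ x, g x ≥ 0 → f x ≥ 0) {z : E} (hfz : f z < 0) (hgz : g z < 0) :
    ∃ ξ, 0 < ξ ∧ ∀ x, ξ * g x ≤ f x := by
  set S := (fun x => f x / g x) '' {x | g x < 0}
  have hzS : f z / g z ∈ S := ⟨z, hgz, rfl⟩
  have hS := bddAbove_div_of_neg hk hf hg hfc hgc hzero hcop
  refine ⟨sSup S, (div_pos_of_neg_of_neg hfz hgz).trans_le (le_csSup hS hzS), fun x => ?_⟩
  rcases lt_trichotomy (g x) 0 with hx | hx | hx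
  · exact (div_le_iff_of_neg hx).1 (le_csSup hS ⟨x, hx, rfl⟩)
  · simpa [hx] using hcop x hx.ge
  by_contra! hlt
  have hslope : ∀ s, f x / g x < s → s < sSup S →
      ∃ b, 0 < b ∧ IsLineDirection f g (s * b) b := by
    intro s hxs hsS
    obtain ⟨_, ⟨x₁, hx₁, rfl⟩, hs₁⟩ := exists_lt_of_lt_csSup ⟨_, hzS⟩ hsS
    exact exists_isLineDirection_of_isPreconnected hE hk hf hg hfc hgc hzero hcop hx
      ((div_lt_iff₀ hx).1 hxs) hx₁ ((lt_div_iff_of_neg hx₁).1 hs₁)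
  obtain ⟨s₁, hxs₁, hs₁⟩ := exists_between ((div_lt_iff₀ hx).2 hlt)
  obtain ⟨s₂, hs₁₂, hs₂⟩ := exists_between hs₁
  obtain ⟨b₁, hb₁, hl₁⟩ := hslope s₁ hxs₁ (hs₁₂.trans hs₂)
  obtain ⟨b₂, hb₂, hl₂⟩ := hslope s₂ (hxs₁.trans hs₁₂) hs₂
  rcases hline _ _ _ _ hl₁ hl₂ with ⟨hs, rfl⟩ | ⟨-, hb⟩
  · exact hs₁₂.ne (mul_right_cancel₀ hb₁.ne' hs)
  · linarith

theorem exists_pos_smul_le_of_copositive [FiniteDimensional ℝ E] (hk : k ≠ 0)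
    (hf : ∀ (c : ℝ) x, f (c • x) = c ^ k * f x) (hg : ∀ (c : ℝ) x, g (c • x) = c ^ k * g x)
    (hfc : Continuous f) (hgc : Continuous g) (hzero : ∀ x, f x = 0 → g x = 0 → x = 0)
    (hline : ∀ a b a' b' : ℝ, IsLineDirection f g a b → IsLineDirection f g a' b' →
      (a = a' ∧ b = b') ∨ (a = -a' ∧ b = -b'))
    (hcop : ∀ x, g x ≥ 0 → f x ≥ 0) {z : E} (hfz : f z < 0) :
    ∃ ξ, 0 < ξ ∧ ∀ x, ξ * g x ≤ f x := by
  have hgz : g z < 0 := not_le.1 fun hgz => hfz.not_ge (hcop z hgz)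
  have hz : z ≠ 0 := by
    rintro rfl
    exact hfz.ne (apply_zero_of_homogeneous hk hf)
  have hpos : 1 ≤ Module.finrank ℝ E := Module.finrank_pos_iff_exists_ne_zero.2 ⟨z, hz⟩
  rcases hpos.eq_or_lt with h1 | h1
  · exact exists_pos_smul_le_of_forall_eq_smul hf hg hfz hgz
      ((finrank_eq_one_iff_of_nonzero' z hz).1 h1.symm)
  · have hrank : 1 < Module.rank ℝ E := by
      rw [← Module.finrank_eq_rank]
      exact_mod_cast h1
    exact exists_pos_smul_le_of_isPreconnected
      (isConnected_compl_singleton_of_one_lt_rank hrank 0).isPreconnected hk hf hg hfc hgc hzero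
      hline hcop hfz hgz

end Copositive

theorem hs_lemma_strict (n : ℕ) (k : ℕ) (hk : 1 ≤ k)
    (p q : MvPolynomial (Fin n) ℝ)
    (hp : p.IsHomogeneous k) (hq : q.IsHomogeneous k)
    (f g : (Fin n → ℝ) → ℝ)
    (hf : ∀ x, f x = MvPolynomial.eval x p)
    (hg : ∀ x, g x = MvPolynomial.eval x q)
    (hzero : ∀ x : Fin n → ℝ, f x = 0 → g x = 0 → x = 0)
    (hline : ∀ a b a' b' : ℝ,
      (a ^ 2 + b ^ 2 = 1 ∧ (∃ x, f x = a ∧ g x = b) ∧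
        (∃ x, f x = -a ∧ g x = -b)) →
      (a' ^ 2 + b' ^ 2 = 1 ∧ (∃ x, f x = a' ∧ g x = b') ∧
        (∃ x, f x = -a' ∧ g x = -b')) →
      (a = a' ∧ b = b') ∨ (a = -a' ∧ b = -b'))
    (hcop : ∀ x : Fin n → ℝ, g x ≥ 0 → f x ≥ 0)
    (hneg : ∃ z : Fin n → ℝ, f z < 0) :
    ∃ ξ : ℝ, 0 < ξ ∧ ∀ x : Fin n → ℝ, f x - ξ * g x ≥ 0 := by
  have hfc : Continuous f := by
    rw [funext hf]
    exact MvPolynomial.continuous_eval p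
  have hgc : Continuous g := by
    rw [funext hg]
    exact MvPolynomial.continuous_eval q
  obtain ⟨z, hz⟩ := hneg
  obtain ⟨ξ, hξ, hle⟩ := exists_pos_smul_le_of_copositive (Nat.one_le_iff_ne_zero.1 hk)
    (fun c x => by rw [hf, hf, hp.eval_smul]) (fun c x => by rw [hg, hg, hq.eval_smul])
    hfc hgc hzero hline hcop hz
  exact ⟨ξ, hξ, fun x => sub_nonneg.2 (hle x)⟩
end
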